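/- A function f : X → Y between topological spaces is AB-continuous if and only if it is semi-continuous and B-continuous, if and only if it is β-continuous and B-continuous. -/
import Mathlib


open TopologicalSpace

variable {X Y : Type*} [TopologicalSpace X] [TopologicalSpace Y]

def SemiOpen (A : Set X) : Prop := A ⊆ closure (interior A)
def SemiClosed (A : Set X) : Prop := interior (closure A) ⊆ A
def SemiRegular (A : Set X) : Prop := SemiOpen A ∧ SemiClosed A
def ABSet (A : Set X) : Prop := ∃ U V : Set X, IsOpen U ∧ SemiRegular V ∧ A = U ∩ V
def BSet (A : Set X) : Prop := ∃ U V : Set X, IsOpen U ∧ SemiClosed V ∧ A = U ∩ V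
def BetaOpen (A : Set X) : Prop := A ⊆ closure (interior (closure A))
def BetaClosed (A : Set X) : Prop := interior (closure (interior A)) ⊆ A
def Preopen (A : Set X) : Prop := A ⊆ interior (closure A)
def Preclosed (A : Set X) : Prop := closure (interior A) ⊆ A
def ICSet (A : Set X) : Prop := IsClosed ((Subtype.val ⁻¹' interior A : Set A))
def sCl (A : Set X) : Set X := ⋂₀ {B : Set X | SemiClosed B ∧ A ⊆ B}

lemma aux_closed_inter_semiClosed {C V : Set X} (hC : IsClosed C) (hV : SemiClosed V) :
    SemiClosed (C ∩ V) := by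
  intro x hx
  have h1 : closure (C ∩ V) ⊆ C ∩ closure V := by
    refine Set.subset_inter ?_ (closure_mono Set.inter_subset_right)
    exact (closure_mono Set.inter_subset_left).trans hC.closure_subset
  have h2 : x ∈ interior (C ∩ closure V) := interior_mono h1 hx
  rw [interior_inter] at h2
  exact ⟨interior_subset h2.1, hV h2.2⟩

lemma aux_AB_semiOpen {A : Set X} (h : ABSet A) : SemiOpen A := by
  obtain ⟨U, V, hU, ⟨hVso, _⟩, rfl⟩ := h
  calc U ∩ V ⊆ U ∩ closure (interior V) := Set.inter_subset_inter_right _ hVso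
    _ ⊆ closure (U ∩ interior V) := hU.inter_closure
    _ ⊆ closure (interior (U ∩ V)) := closure_mono <| by
        rw [interior_inter, hU.interior_eq]

lemma aux_AB_B {A : Set X} (h : ABSet A) : BSet A := by
  obtain ⟨U, V, hU, ⟨_, hVsc⟩, rfl⟩ := h
  exact ⟨U, V, hU, hVsc, rfl⟩

lemma aux_semi_beta {A : Set X} (h : SemiOpen A) : BetaOpen A :=
  h.trans (closure_mono (interior_mono subset_closure))

lemma aux_beta_B_semi {A : Set X} (hb : BetaOpen A) (hB : BSet A) : SemiOpen A := by
  obtain ⟨U, V, hU, hVsc, rfl⟩ := hB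
  have h1 : interior (closure (U ∩ V)) ⊆ V :=
    (interior_mono (closure_mono Set.inter_subset_right)).trans hVsc
  have h2 : U ∩ interior (closure (U ∩ V)) ⊆ interior (U ∩ V) := by
    apply interior_maximal _ (hU.inter isOpen_interior)
    exact Set.subset_inter Set.inter_subset_left ((Set.inter_subset_right).trans h1)
  calc U ∩ V ⊆ U ∩ closure (interior (closure (U ∩ V))) :=
        Set.subset_inter Set.inter_subset_left hb
    _ ⊆ closure (U ∩ interior (closure (U ∩ V))) := hU.inter_closure
    _ ⊆ closure (interior (U ∩ V)) := closure_mono h2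

lemma aux_semi_B_AB {A : Set X} (hs : SemiOpen A) (hB : BSet A) : ABSet A := by
  obtain ⟨U, V, hU, hVsc, rfl⟩ := hB
  refine ⟨U, closure (interior (U ∩ V)) ∩ V, hU, ⟨?_, ?_⟩, ?_⟩
  · -- semi-open
    have hsub : interior (U ∩ V) ⊆ closure (interior (U ∩ V)) ∩ V :=
      Set.subset_inter subset_closure (interior_subset.trans Set.inter_subset_right)
    have h2 : interior (U ∩ V) ⊆ interior (closure (interior (U ∩ V)) ∩ V) :=
      interior_maximal hsub isOpen_interior
    exact Set.inter_subset_left.trans (closure_mono h2)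
  · exact aux_closed_inter_semiClosed isClosed_closure hVsc
  · apply Set.Subset.antisymm
    · exact Set.subset_inter Set.inter_subset_left (Set.subset_inter hs Set.inter_subset_right)
    · rintro x ⟨hxU, _, hxV⟩
      exact ⟨hxU, hxV⟩

theorem stmt19 (f : X → Y) :
    ((∀ V : Set Y, IsOpen V → ABSet (f ⁻¹' V)) ↔
      (∀ V : Set Y, IsOpen V → SemiOpen (f ⁻¹' V)) ∧
      (∀ V : Set Y, IsOpen V → BSet (f ⁻¹' V))) ∧
    ((∀ V : Set Y, IsOpen V → ABSet (f ⁻¹' V)) ↔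
      (∀ V : Set Y, IsOpen V → BetaOpen (f ⁻¹' V)) ∧
      (∀ V : Set Y, IsOpen V → BSet (f ⁻¹' V))) := by
  constructor
  · constructor
    · exact fun h => ⟨fun V hV => aux_AB_semiOpen (h V hV), fun V hV => aux_AB_B (h V hV)⟩
    · rintro ⟨h1, h2⟩ V hV
      exact aux_semi_B_AB (h1 V hV) (h2 V hV)
  · constructor
    · exact fun h => ⟨fun V hV => aux_semi_beta (aux_AB_semiOpen (h V hV)),
        fun V hV => aux_AB_B (h V hV)⟩
    · rintro ⟨h1, h2⟩ V hV
      exact aux_semi_B_AB (aux_beta_B_semi (h1 V hV) (h2 V hV)) (h2 V hV)
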